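/- arXiv:1302.0196 — 2 statements merged into one kernel-verified Lean document; each statement's English description precedes it below -/
import Mathlib

section
/- If the residual component satisfies (b - A p_{i-1}, e_i)² ≥ ‖b - A p_{i-1}‖²/N, then ‖x - p_i‖² ≤ (1 − 1/(N κ(AAᵀ))) ‖x - p_{i-1}‖², where κ(AAᵀ) is the spectral condition number of AAᵀ and p_i is the Kaczmarz update using row i. -/
/-!
With `y = x - p` and `a = Aᵀ eᵢ`, the Kaczmarz step is the orthogonal projection of `y` off `a`,
so `‖x - p'‖² = ‖y‖² - (y ⬝ a)² / ‖a‖²`, and `y ⬝ a` is the `i`-th residual component. Now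
`‖a‖² = eᵢᵀ A Aᵀ eᵢ ≤ λ_max`, while by hypothesis `(y ⬝ a)² ≥ ‖A y‖² / N ≥ λ_min ‖y‖² / N`; the
last bound follows in the eigenbasis of `A Aᵀ` after writing `y = Aᵀ w`, since then
`‖y‖² = wᵀ (A Aᵀ) w` and `‖A y‖² = ‖(A Aᵀ) w‖²`.
-/

open Matrix

namespace Matrix

variable {n : Type*} [Fintype n]

lemma transpose_mulVec_dotProduct_transpose_mulVec {m : Type*} [Fintype m] (A : Matrix m n ℝ)
    (u : m → ℝ) :
    (Aᵀ *ᵥ u) ⬝ᵥ (Aᵀ *ᵥ u) = u ⬝ᵥ ((A * Aᵀ) *ᵥ u) := by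
  rw [← mulVec_mulVec, dotProduct_mulVec u A, ← mulVec_transpose]

variable [DecidableEq n]

lemma unitaryGroup_mulVec_dotProduct_mulVec (U : unitaryGroup n ℝ) (u w : n → ℝ) :
    ((U : Matrix n n ℝ) *ᵥ u) ⬝ᵥ ((U : Matrix n n ℝ) *ᵥ w) = u ⬝ᵥ w := by
  rw [dotProduct_mulVec, ← mulVec_transpose, mulVec_mulVec,
    ← conjTranspose_eq_transpose_of_trivial, ← star_eq_conjTranspose, UnitaryGroup.star_mul_self,
    one_mulVec]

lemma dotProduct_diagonal_mulVec_le_iSup_mul (d c : n → ℝ) :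
    c ⬝ᵥ (diagonal d *ᵥ c) ≤ (⨆ j, d j) * (c ⬝ᵥ c) := by
  simp only [dotProduct, mulVec_diagonal, Finset.mul_sum]
  refine Finset.sum_le_sum fun j _ => ?_
  have hj : d j ≤ ⨆ k, d k := le_ciSup (Set.finite_range d).bddAbove j
  nlinarith [mul_self_nonneg (c j)]

lemma iInf_mul_dotProduct_diagonal_mulVec_le {d : n → ℝ} (hd : ∀ j, 0 ≤ d j) (c : n → ℝ) :
    (⨅ j, d j) * (c ⬝ᵥ (diagonal d *ᵥ c)) ≤
      (diagonal d *ᵥ c) ⬝ᵥ (diagonal d *ᵥ c) := by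
  simp only [dotProduct, mulVec_diagonal, Finset.mul_sum]
  refine Finset.sum_le_sum fun j _ => ?_
  have hj : (⨅ k, d k) ≤ d j := ciInf_le (Set.finite_range d).bddBelow j
  nlinarith [mul_nonneg (mul_nonneg (sub_nonneg.2 hj) (hd j)) (mul_self_nonneg (c j))]

namespace IsHermitian

variable {M : Matrix n n ℝ} (hM : M.IsHermitian)

noncomputable def eigenCoords (v : n → ℝ) : n → ℝ :=
  star (hM.eigenvectorUnitary : Matrix n n ℝ) *ᵥ v

lemma eq_eigenvectorUnitary_mulVec_eigenCoords (v : n → ℝ) :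
    v = (hM.eigenvectorUnitary : Matrix n n ℝ) *ᵥ hM.eigenCoords v := by
  rw [eigenCoords, mulVec_mulVec, Unitary.mul_star_self_of_mem (SetLike.coe_mem _), one_mulVec]

lemma mulVec_eq_eigenvectorUnitary_mulVec_diagonal (v : n → ℝ) :
    M *ᵥ v = (hM.eigenvectorUnitary : Matrix n n ℝ) *ᵥ
      (diagonal hM.eigenvalues *ᵥ hM.eigenCoords v) := by
  conv_lhs => rw [hM.spectral_theorem]
  simp [eigenCoords, mulVec_mulVec, Matrix.mul_assoc]

lemma dotProduct_self_eq_eigenCoords (v : n → ℝ) :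
    v ⬝ᵥ v = hM.eigenCoords v ⬝ᵥ hM.eigenCoords v := by
  conv_lhs => rw [hM.eq_eigenvectorUnitary_mulVec_eigenCoords v]
  exact unitaryGroup_mulVec_dotProduct_mulVec hM.eigenvectorUnitary _ _

lemma dotProduct_mulVec_eq_eigenCoords (v : n → ℝ) :
    v ⬝ᵥ (M *ᵥ v) =
      hM.eigenCoords v ⬝ᵥ (diagonal hM.eigenvalues *ᵥ hM.eigenCoords v) := by
  rw [hM.mulVec_eq_eigenvectorUnitary_mulVec_diagonal,
    ← unitaryGroup_mulVec_dotProduct_mulVec hM.eigenvectorUnitary (hM.eigenCoords v),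
    ← hM.eq_eigenvectorUnitary_mulVec_eigenCoords]

lemma mulVec_dotProduct_mulVec_eq_eigenCoords (v : n → ℝ) :
    (M *ᵥ v) ⬝ᵥ (M *ᵥ v) = (diagonal hM.eigenvalues *ᵥ hM.eigenCoords v) ⬝ᵥ
      (diagonal hM.eigenvalues *ᵥ hM.eigenCoords v) := by
  rw [hM.mulVec_eq_eigenvectorUnitary_mulVec_diagonal,
    unitaryGroup_mulVec_dotProduct_mulVec]

lemma dotProduct_mulVec_le_iSup_eigenvalues_mul (v : n → ℝ) :
    v ⬝ᵥ (M *ᵥ v) ≤ (⨆ j, hM.eigenvalues j) * (v ⬝ᵥ v) := by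
  rw [hM.dotProduct_mulVec_eq_eigenCoords, hM.dotProduct_self_eq_eigenCoords]
  exact dotProduct_diagonal_mulVec_le_iSup_mul _ _

lemma iInf_eigenvalues_mul_dotProduct_mulVec_le (hnn : ∀ j, 0 ≤ hM.eigenvalues j)
    (v : n → ℝ) :
    (⨅ j, hM.eigenvalues j) * (v ⬝ᵥ (M *ᵥ v)) ≤ (M *ᵥ v) ⬝ᵥ (M *ᵥ v) := by
  rw [hM.dotProduct_mulVec_eq_eigenCoords, hM.mulVec_dotProduct_mulVec_eq_eigenCoords]
  exact iInf_mul_dotProduct_diagonal_mulVec_le hnn _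

end IsHermitian

lemma iInf_eigenvalues_mul_dotProduct_self_le {A : Matrix n n ℝ} (hA : IsUnit A)
    (hH : (A * Aᵀ).IsHermitian) (y : n → ℝ) :
    (⨅ j, hH.eigenvalues j) * (y ⬝ᵥ y) ≤ (A *ᵥ y) ⬝ᵥ (A *ᵥ y) := by
  obtain ⟨w, rfl⟩ := mulVec_surjective_iff_isUnit.2 (A.isUnit_transpose.2 hA) y
  have hP : (A * Aᵀ).PosSemidef := by
    simpa only [conjTranspose_eq_transpose_of_trivial] using posSemidef_self_mul_conjTranspose A
  rw [transpose_mulVec_dotProduct_transpose_mulVec, mulVec_mulVec]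
  exact hH.iInf_eigenvalues_mul_dotProduct_mulVec_le hP.eigenvalues_nonneg w

end Matrix

lemma dotProduct_self_sub_div_smul {n K : Type*} [Fintype n] [Field K] (y a : n → K) :
    (y - ((y ⬝ᵥ a) / (a ⬝ᵥ a)) • a) ⬝ᵥ (y - ((y ⬝ᵥ a) / (a ⬝ᵥ a)) • a) =
      y ⬝ᵥ y - (y ⬝ᵥ a) ^ 2 / (a ⬝ᵥ a) := by
  simp only [sub_dotProduct, dotProduct_sub, smul_dotProduct, dotProduct_smul, smul_eq_mul]
  rw [dotProduct_comm a y]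
  rcases eq_or_ne (a ⬝ᵥ a) 0 with h | h
  · simp [h]
  · field_simp
    ring

lemma sq_dotProduct_div_le_of_dotProduct_self_le {n : Type*} [Fintype n] (y a : n → ℝ) {L : ℝ}
    (h : a ⬝ᵥ a ≤ L) : (y ⬝ᵥ a) ^ 2 / L ≤ (y ⬝ᵥ a) ^ 2 / (a ⬝ᵥ a) := by
  rcases eq_or_ne a 0 with rfl | ha
  · simp
  have hpos : 0 < a ⬝ᵥ a := by
    simpa only [star_trivial] using dotProduct_self_star_pos_iff.2 ha
  exact div_le_div_of_nonneg_left (sq_nonneg _) hpos h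

theorem kaczmarz_step_conditional_contraction_general {N : ℕ} (A : Matrix (Fin N) (Fin N) ℝ)
    (hA : IsUnit A)
    (hH : (A * Aᵀ).IsHermitian)
    (b x p : Fin N → ℝ) (hx : A *ᵥ x = b) (i : Fin N)
    (p' : Fin N → ℝ)
    (hp' : p' = p + (((b - A *ᵥ p) ⬝ᵥ Pi.single i 1) /
      ((Aᵀ *ᵥ Pi.single i 1) ⬝ᵥ (Aᵀ *ᵥ Pi.single i 1))) • (Aᵀ *ᵥ Pi.single i 1))
    (hres : ((b - A *ᵥ p) ⬝ᵥ Pi.single i 1) ^ 2 ≥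
      ((b - A *ᵥ p) ⬝ᵥ (b - A *ᵥ p)) / N) :
    (x - p') ⬝ᵥ (x - p') ≤
      (1 - 1 / (N * ((⨆ j, hH.eigenvalues j) / (⨅ j, hH.eigenvalues j)))) *
        ((x - p) ⬝ᵥ (x - p)) := by
  set e : Fin N → ℝ := Pi.single i 1
  set y := x - p
  set a := Aᵀ *ᵥ e
  set lmax := ⨆ j, hH.eigenvalues j
  set lmin := ⨅ j, hH.eigenvalues j
  have hresidual : b - A *ᵥ p = A *ᵥ y := by rw [mulVec_sub, hx]
  have hcoord : (A *ᵥ y) ⬝ᵥ e = y ⬝ᵥ a := by rw [dotProduct_mulVec, vecMul_transpose]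
  have hstep : x - p' = y - ((y ⬝ᵥ a) / (a ⬝ᵥ a)) • a := by
    rw [hp', hresidual, hcoord, sub_add_eq_sub_sub]
  have hrow : a ⬝ᵥ a ≤ lmax := by
    calc a ⬝ᵥ a = e ⬝ᵥ ((A * Aᵀ) *ᵥ e) := transpose_mulVec_dotProduct_transpose_mulVec A e
      _ ≤ lmax * (e ⬝ᵥ e) := hH.dotProduct_mulVec_le_iSup_eigenvalues_mul e
      _ = lmax := by simp [e]
  have hcoord_sq : lmin * (y ⬝ᵥ y) / N ≤ (y ⬝ᵥ a) ^ 2 := by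
    rw [hresidual, hcoord] at hres
    exact (div_le_div_of_nonneg_right (iInf_eigenvalues_mul_dotProduct_self_le hA hH y)
      (Nat.cast_nonneg N)).trans hres
  have hlmax : 0 ≤ lmax := (Finset.sum_nonneg fun j _ => mul_self_nonneg (a j)).trans hrow
  have hkappa : (1 - 1 / (N * (lmax / lmin))) * (y ⬝ᵥ y) =
      y ⬝ᵥ y - lmin * (y ⬝ᵥ y) / N / lmax := by
    rw [div_div, one_div, mul_inv, inv_div]
    ring
  rw [hstep, dotProduct_self_sub_div_smul, hkappa]
  linarith [sq_dotProduct_div_le_of_dotProduct_self_le y a hrow,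
    div_le_div_of_nonneg_right hcoord_sq hlmax]

/-- Conditional contraction estimate for one Kaczmarz step, with the spectral
condition number κ(AAᵀ) = λ_max(AAᵀ)/λ_min(AAᵀ). -/
theorem kaczmarz_step_conditional_contraction {N : ℕ} (A : Matrix (Fin N) (Fin N) ℝ)
    (hA : IsUnit A) (hrows : ∀ j : Fin N, Aᵀ *ᵥ Pi.single j 1 ≠ 0)
    (hH : (A * Aᵀ).IsHermitian)
    (b x p : Fin N → ℝ) (hx : A *ᵥ x = b) (i : Fin N)
    (p' : Fin N → ℝ)
    (hp' : p' = p + (((b - A *ᵥ p) ⬝ᵥ Pi.single i 1) /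
      ((Aᵀ *ᵥ Pi.single i 1) ⬝ᵥ (Aᵀ *ᵥ Pi.single i 1))) • (Aᵀ *ᵥ Pi.single i 1))
    (hres : ((b - A *ᵥ p) ⬝ᵥ Pi.single i 1) ^ 2 ≥
      ((b - A *ᵥ p) ⬝ᵥ (b - A *ᵥ p)) / N) :
    (x - p') ⬝ᵥ (x - p') ≤
      (1 - 1 / (N * ((⨆ j, hH.eigenvalues j) / (⨅ j, hH.eigenvalues j)))) *
        ((x - p) ⬝ᵥ (x - p)) :=
  kaczmarz_step_conditional_contraction_general A hA hH b x p hx i p' hp' hres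
end

section
/- One full cycle of Kaczmarz's method satisfies the contraction estimate ‖x − x_{n+1}‖² ≤ (1 − (det A)²/∏_{i=1}^N ‖Aᵀe_i‖²) ‖x − x_n‖², i.e., the cycle matrix Q = Q_N ⋯ Q_1 of orthogonal rank-(N−1) projections satisfies ‖Q‖² ≤ 1 − (det A)²/∏_{i=1}^N ‖Aᵀe_i‖². -/
/-!
Normalise the rows to unit vectors `u i`, so that `Q_i = 1 - u_i u_iᵀ`. The cycle maps `v` through
`w₀ = v`, `w_{i+1} = w_i - c_i u_i` with `c_i = ⟪u_i, w_i⟫`, so `‖w_N‖² = ‖v‖² - ‖c‖²`; the errors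
`x - x_k` follow the same recursion, whence `x - x_{n+1} = Q (x - x_n)`. Dotting
`v = w_i + ∑_{j<i} c_j u_j` with `u_i` gives `(1 + L) c = U v`, where `U` has rows `u_i` and `L` is
the strictly lower triangular part of the Gram matrix `U Uᵀ`. Hence `c = M v` with
`M = (1 + L)⁻¹ U`, `det M = det U = det A / ∏ ‖a_i‖`, and `‖M‖ ≤ 1` because `‖c‖² ≤ ‖v‖²`. The
eigenvalues of `Mᵀ M` lie in `[0, 1]` and multiply to `(det M)²`, so each is at least `(det M)²`,
i.e. `‖M v‖² ≥ (det M)² ‖v‖²`.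
-/

open Matrix
open scoped RealInnerProductSpace

lemma dotProduct_self_nonneg {n : Type*} [Fintype n] (v : n → ℝ) : 0 ≤ v ⬝ᵥ v :=
  Fintype.sum_nonneg fun _ => mul_self_nonneg _

theorem LinearMap.IsSymmetric.det_mul_norm_sq_le_inner {E : Type*} [NormedAddCommGroup E]
    [InnerProductSpace ℝ E] [FiniteDimensional ℝ E] {T : E →ₗ[ℝ] E} (hT : T.IsSymmetric)
    (h0 : ∀ x, 0 ≤ ⟪x, T x⟫) (h1 : ∀ x, ⟪x, T x⟫ ≤ ‖x‖ ^ 2) (x : E) :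
    T.det * ‖x‖ ^ 2 ≤ ⟪x, T x⟫ := by
  set b := hT.eigenvectorBasis rfl
  set μ := hT.eigenvalues rfl
  have hμ : ∀ i, ⟪b i, T (b i)⟫ = μ i := by
    intro i
    simp [b, μ, hT.apply_eigenvectorBasis, inner_smul_right]
  have hμ0 : ∀ i, 0 ≤ μ i := fun i => hμ i ▸ h0 (b i)
  have hμ1 : ∀ i, μ i ≤ 1 := fun i => by simpa [hμ i] using h1 (b i)
  have hquad : ⟪x, T x⟫ = ∑ i, μ i * b.repr x i ^ 2 := by
    rw [← b.repr.inner_map_map, PiLp.inner_apply]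
    refine Finset.sum_congr rfl fun i _ => ?_
    simp [b, μ, hT.eigenvectorBasis_apply_self_apply]
    ring
  have hnorm : ‖x‖ ^ 2 = ∑ i, b.repr x i ^ 2 := by
    rw [← b.repr.norm_map, EuclideanSpace.norm_sq_eq]
    simp
  have hdet : T.det = ∏ i, μ i := by simpa using hT.det_eq_prod_eigenvalues rfl
  rw [hquad, hnorm, hdet, Finset.mul_sum]
  refine Finset.sum_le_sum fun i _ => mul_le_mul_of_nonneg_right ?_ (sq_nonneg _)
  rw [← Finset.mul_prod_erase _ _ (Finset.mem_univ i)]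
  exact mul_le_of_le_one_right (hμ0 i)
    (Finset.prod_le_one (fun j _ => hμ0 j) fun j _ => hμ1 j)

theorem Matrix.det_sq_mul_dotProduct_self_le {n : Type*} [Fintype n] [DecidableEq n]
    (M : Matrix n n ℝ) (hM : ∀ x, (M *ᵥ x) ⬝ᵥ (M *ᵥ x) ≤ x ⬝ᵥ x) (v : n → ℝ) :
    M.det ^ 2 * (v ⬝ᵥ v) ≤ (M *ᵥ v) ⬝ᵥ (M *ᵥ v) := by
  have hquad : ∀ x : n → ℝ, ⟪WithLp.toLp 2 x, toEuclideanLin (Mᵀ * M) (WithLp.toLp 2 x)⟫ =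
      (M *ᵥ x) ⬝ᵥ (M *ᵥ x) := by
    intro x
    rw [toLpLin_apply, EuclideanSpace.inner_toLp_toLp, star_trivial, ← mulVec_mulVec,
      dotProduct_comm, dotProduct_mulVec, vecMul_transpose]
  have hnorm : ∀ x : n → ℝ, ‖WithLp.toLp 2 x‖ ^ 2 = x ⬝ᵥ x := by
    intro x
    rw [← real_inner_self_eq_norm_sq, EuclideanSpace.inner_toLp_toLp, star_trivial]
  have hS : (toEuclideanLin (Mᵀ * M)).IsSymmetric :=
    isSymmetric_toEuclideanLin_iff.mpr (by
      simpa [conjTranspose_eq_transpose_of_trivial] using isHermitian_conjTranspose_mul_self M)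
  have h := hS.det_mul_norm_sq_le_inner
    (fun x => hquad x.ofLp ▸ dotProduct_self_star_nonneg (M *ᵥ x.ofLp))
    (fun x => (hquad x.ofLp).trans_le ((hM x.ofLp).trans (hnorm x.ofLp).ge)) (WithLp.toLp 2 v)
  rwa [hquad, hnorm, LinearMap.det_toLpLin, det_mul, det_transpose, ← sq] at h

section Sweep

variable {n : Type*} [Fintype n] {m : ℕ} (u : Fin m → n → ℝ) (v : n → ℝ)

def projectionSweep : ℕ → n → ℝ
  | 0 => v
  | k + 1 =>
    if h : k < m then
      projectionSweep k - (u ⟨k, h⟩ ⬝ᵥ projectionSweep k) • u ⟨k, h⟩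
    else projectionSweep k

@[simp]
lemma projectionSweep_zero : projectionSweep u v 0 = v := rfl

lemma projectionSweep_succ (i : Fin m) :
    projectionSweep u v (i + 1) =
      projectionSweep u v i - (u i ⬝ᵥ projectionSweep u v i) • u i := by
  simp [projectionSweep, i.isLt]

def sweepCoeff (i : Fin m) : ℝ := u i ⬝ᵥ projectionSweep u v i

lemma Fin.sum_ite_val_lt_succ {M : Type*} [AddCommMonoid M] (f : Fin m → M) {k : ℕ}
    (hk : k < m) :
    ∑ i : Fin m, (if (i : ℕ) < k + 1 then f i else 0) =
      ∑ i : Fin m, (if (i : ℕ) < k then f i else 0) + f ⟨k, hk⟩ := by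
  rw [← Fintype.sum_ite_eq' (⟨k, hk⟩ : Fin m) f, ← Finset.sum_add_distrib]
  refine Finset.sum_congr rfl fun i _ => ?_
  by_cases hi : (i : ℕ) = k
  · simp [hi, Fin.ext_iff]
  · simp [hi, Fin.ext_iff, show (i : ℕ) < k + 1 ↔ (i : ℕ) < k by omega]

lemma sub_projectionSweep {k : ℕ} (hk : k ≤ m) :
    v - projectionSweep u v k = ∑ i : Fin m, if (i : ℕ) < k then sweepCoeff u v i • u i else 0 := by
  induction k with
  | zero => simp
  | succ k ih =>
    rw [Fin.sum_ite_val_lt_succ _ hk, ← ih (by omega)]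
    rw [projectionSweep_succ u v ⟨k, hk⟩, sweepCoeff]
    abel

lemma projectionSweep_dotProduct_self (hu : ∀ i, u i ⬝ᵥ u i = 1) {k : ℕ} (hk : k ≤ m) :
    projectionSweep u v k ⬝ᵥ projectionSweep u v k =
      v ⬝ᵥ v - ∑ i : Fin m, if (i : ℕ) < k then sweepCoeff u v i ^ 2 else 0 := by
  induction k with
  | zero => simp
  | succ k ih =>
    rw [Fin.sum_ite_val_lt_succ _ hk, sub_add_eq_sub_sub, ← ih (by omega)]
    rw [projectionSweep_succ u v ⟨k, hk⟩, sweepCoeff]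
    simp only [sub_dotProduct, dotProduct_sub, smul_dotProduct, dotProduct_smul, smul_eq_mul, hu,
      dotProduct_comm (projectionSweep u v k) (u ⟨k, hk⟩)]
    ring

def strictLowerGram : Matrix (Fin m) (Fin m) ℝ := of fun i j => if j < i then u i ⬝ᵥ u j else 0

lemma det_one_add_strictLowerGram : (1 + strictLowerGram u).det = 1 := by
  rw [det_of_isLowerTriangular]
  · simp [strictLowerGram]
  · intro i j (hij : i < j)
    simp [strictLowerGram, hij.ne, hij.not_gt]

lemma one_add_strictLowerGram_mulVec_sweepCoeff :
    (1 + strictLowerGram u) *ᵥ sweepCoeff u v = of u *ᵥ v := by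
  ext i
  have hv : u i ⬝ᵥ v = u i ⬝ᵥ projectionSweep u v i + u i ⬝ᵥ (v - projectionSweep u v i) := by
    rw [← dotProduct_add, add_sub_cancel]
  rw [add_mulVec, one_mulVec, Pi.add_apply]
  change _ = u i ⬝ᵥ v
  rw [hv, sub_projectionSweep u v i.isLt.le, dotProduct_sum]
  congr 1
  change ∑ j, strictLowerGram u i j * sweepCoeff u v j = _
  refine Finset.sum_congr rfl fun j _ => ?_
  simp only [strictLowerGram, of_apply, Fin.lt_def]
  split_ifs <;> simp [dotProduct_smul, mul_comm]

lemma sweepCoeff_eq_mulVec :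
    sweepCoeff u v = ((1 + strictLowerGram u)⁻¹ * of u) *ᵥ v := by
  have hL : IsUnit (1 + strictLowerGram u).det := by
    rw [det_one_add_strictLowerGram]; exact isUnit_one
  rw [← mulVec_mulVec, ← one_add_strictLowerGram_mulVec_sweepCoeff, mulVec_mulVec,
    nonsing_inv_mul _ hL, one_mulVec]

lemma projectionSweep_dotProduct_self_eq_sub (hu : ∀ i, u i ⬝ᵥ u i = 1) :
    projectionSweep u v m ⬝ᵥ projectionSweep u v m =
      v ⬝ᵥ v - sweepCoeff u v ⬝ᵥ sweepCoeff u v := by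
  rw [projectionSweep_dotProduct_self u v hu le_rfl]
  simp [dotProduct, sq]

end Sweep

theorem projectionSweep_dotProduct_self_le {m : ℕ} (u : Fin m → Fin m → ℝ)
    (hu : ∀ i, u i ⬝ᵥ u i = 1) (v : Fin m → ℝ) :
    projectionSweep u v m ⬝ᵥ projectionSweep u v m ≤ (1 - (of u).det ^ 2) * (v ⬝ᵥ v) := by
  set M := (1 + strictLowerGram u)⁻¹ * of u
  have hM : ∀ x, (M *ᵥ x) ⬝ᵥ (M *ᵥ x) =
      x ⬝ᵥ x - projectionSweep u x m ⬝ᵥ projectionSweep u x m := fun x => by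
    rw [projectionSweep_dotProduct_self_eq_sub u x hu, sweepCoeff_eq_mulVec]
    ring
  have hdet : M.det = (of u).det := by
    simp [M, det_nonsing_inv, det_one_add_strictLowerGram]
  have h := M.det_sq_mul_dotProduct_self_le
    (fun x => by rw [hM]; linarith [dotProduct_self_nonneg (projectionSweep u x m)]) v
  rw [hdet, hM] at h
  linarith

section Rows

variable {n : Type*} [Fintype n]

lemma inv_sqrt_smul_dotProduct_self {a : n → ℝ} (ha : a ≠ 0) :
    ((√(a ⬝ᵥ a))⁻¹ • a) ⬝ᵥ ((√(a ⬝ᵥ a))⁻¹ • a) = 1 := by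
  have hpos : 0 < a ⬝ᵥ a := (dotProduct_self_nonneg a).lt_of_ne
    fun h => ha (dotProduct_self_eq_zero.mp h.symm)
  rw [smul_dotProduct, dotProduct_smul, smul_eq_mul, smul_eq_mul, ← mul_assoc, ← mul_inv,
    Real.mul_self_sqrt hpos.le, inv_mul_cancel₀ hpos.ne']

lemma inv_sqrt_smul_dotProduct_smul (a w : n → ℝ) :
    (((√(a ⬝ᵥ a))⁻¹ • a) ⬝ᵥ w) • ((√(a ⬝ᵥ a))⁻¹ • a) = ((a ⬝ᵥ w) / (a ⬝ᵥ a)) • a := by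
  rw [smul_dotProduct, smul_smul, smul_eq_mul, mul_right_comm, ← mul_inv,
    Real.mul_self_sqrt (dotProduct_self_nonneg a), inv_mul_eq_div]

lemma one_sub_inv_smul_vecMulVec_mulVec [DecidableEq n] (a w : n → ℝ) :
    (1 - (a ⬝ᵥ a)⁻¹ • vecMulVec a a) *ᵥ w = w - ((a ⬝ᵥ w) / (a ⬝ᵥ a)) • a := by
  rw [sub_mulVec, one_mulVec, smul_mulVec, vecMulVec_mulVec, op_smul_eq_smul, smul_smul,
    inv_mul_eq_div]

lemma det_inv_sqrt_smul_rows_sq [DecidableEq n] (A : Matrix n n ℝ) :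
    (of fun i => (√(A i ⬝ᵥ A i))⁻¹ • A i).det ^ 2 = A.det ^ 2 / ∏ i, A i ⬝ᵥ A i := by
  have hdiag : (of fun i => (√(A i ⬝ᵥ A i))⁻¹ • A i) =
      diagonal (fun i => (√(A i ⬝ᵥ A i))⁻¹) * A := by
    ext i j; simp [diagonal_mul]
  rw [hdiag, det_mul, det_diagonal, mul_pow, ← Finset.prod_pow]
  rw [Finset.prod_congr rfl fun i _ => by
    rw [inv_pow, Real.sq_sqrt (dotProduct_self_nonneg (A i))],
    Finset.prod_inv_distrib, inv_mul_eq_div]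

end Rows

lemma List.prod_reverse_ofFn_mulVec {n R : Type*} [Fintype n] [DecidableEq n] [Semiring R]
    {m : ℕ} (F : Fin m → Matrix n n R) (w : ℕ → n → R) (hw : ∀ i : Fin m, w (i + 1) = F i *ᵥ w i) :
    (List.ofFn F).reverse.prod *ᵥ w 0 = w m := by
  induction m with
  | zero => simp
  | succ m ih =>
    rw [List.ofFn_succ', List.concat_eq_append, List.reverse_append, List.reverse_singleton,
      List.singleton_append, List.prod_cons, ← mulVec_mulVec, ih _ fun i => hw i.castSucc]
    exact (hw (Fin.last m)).symm

/-- Contraction estimate for one full Kaczmarz cycle: the error contracts by the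
factor 1 − (det A)²/∏‖Aᵀe_i‖², equivalently the cycle matrix Q = Q_N⋯Q_1
satisfies ‖Q v‖² ≤ (1 − (det A)²/∏‖Aᵀe_i‖²)‖v‖² for all v. -/
theorem kaczmarz_cycle_contraction {N : ℕ} (A : Matrix (Fin N) (Fin N) ℝ)
    (hA : IsUnit A) (hrows : ∀ j : Fin N, Aᵀ *ᵥ Pi.single j 1 ≠ 0)
    (b x : Fin N → ℝ) (hx : x = A⁻¹ *ᵥ b)
    (xn : Fin N → ℝ) (p : ℕ → Fin N → ℝ) (hp0 : p 0 = xn)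
    (hstep : ∀ i : Fin N, p (i + 1) = p i +
      (((b - A *ᵥ p i) ⬝ᵥ Pi.single i 1) /
        ((Aᵀ *ᵥ Pi.single i 1) ⬝ᵥ (Aᵀ *ᵥ Pi.single i 1))) • (Aᵀ *ᵥ Pi.single i 1))
    (xn1 : Fin N → ℝ) (hxn1 : xn1 = p N)
    (Q : Matrix (Fin N) (Fin N) ℝ)
    (hQ : Q = (List.ofFn (fun i : Fin N =>
      (1 : Matrix (Fin N) (Fin N) ℝ) -
        (((Aᵀ *ᵥ Pi.single i 1) ⬝ᵥ (Aᵀ *ᵥ Pi.single i 1))⁻¹) •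
          vecMulVec (Aᵀ *ᵥ Pi.single i 1) (Aᵀ *ᵥ Pi.single i 1))).reverse.prod) :
    (x - xn1) ⬝ᵥ (x - xn1) ≤
      (1 - (A.det ^ 2) /
        ∏ i : Fin N, (Aᵀ *ᵥ Pi.single i 1) ⬝ᵥ (Aᵀ *ᵥ Pi.single i 1)) *
        ((x - xn) ⬝ᵥ (x - xn)) ∧
    ∀ v : Fin N → ℝ, (Q *ᵥ v) ⬝ᵥ (Q *ᵥ v) ≤
      (1 - (A.det ^ 2) /
        ∏ i : Fin N, (Aᵀ *ᵥ Pi.single i 1) ⬝ᵥ (Aᵀ *ᵥ Pi.single i 1)) *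
        (v ⬝ᵥ v) := by
  have hrow : ∀ i, Aᵀ *ᵥ Pi.single i 1 = A i := fun i => by ext j; simp [mulVec_single]
  simp only [hrow] at hrows hstep hQ ⊢
  set u : Fin N → Fin N → ℝ := fun i => (√(A i ⬝ᵥ A i))⁻¹ • A i
  have hsweep : ∀ v, Q *ᵥ v = projectionSweep u v N := fun v => by
    rw [hQ]
    refine List.prod_reverse_ofFn_mulVec _ (projectionSweep u v) fun i => ?_
    rw [projectionSweep_succ, one_sub_inv_smul_vecMulVec_mulVec, inv_sqrt_smul_dotProduct_smul]
  have hAx : A *ᵥ x = b := by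
    rw [hx, mulVec_mulVec, mul_nonsing_inv _ ((isUnit_iff_isUnit_det A).mp hA), one_mulVec]
  have hcycle : Q *ᵥ (x - xn) = x - xn1 := by
    rw [hQ, hxn1, ← hp0]
    refine List.prod_reverse_ofFn_mulVec _ (fun k => x - p k) fun i => ?_
    rw [one_sub_inv_smul_vecMulVec_mulVec, hstep, ← hAx, ← mulVec_sub, dotProduct_single, mul_one,
      sub_add_eq_sub_sub]
    rfl
  have hbound : ∀ v, (Q *ᵥ v) ⬝ᵥ (Q *ᵥ v) ≤
      (1 - A.det ^ 2 / ∏ i, A i ⬝ᵥ A i) * (v ⬝ᵥ v) := fun v => by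
    rw [hsweep, ← det_inv_sqrt_smul_rows_sq]
    exact projectionSweep_dotProduct_self_le u (fun i => inv_sqrt_smul_dotProduct_self (hrows i)) v
  exact ⟨hcycle ▸ hbound _, hbound⟩
end
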